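/- arXiv:2207.03896 — 6 statements merged into one kernel-verified Lean document; each statement's English description precedes it below -/
import Mathlib

section
/- For multilinear function series F, G, H over a unital algebra B with G_0 = H_0 = 0, composition is associative: (F∘G)∘H = F∘(G∘H). -/
open scoped BigOperators

/-- A multilinear function series over `B`: a sequence of `n`-ary `B`-valued functions
(multilinearity is imposed separately via `MLS.IsMultilinear`). -/
abbrev MLS (B : Type*) : Type _ := ∀ n : ℕ, (Fin n → B) → B

namespace MLS

variable {B : Type*}

/-- The constant term `F₀` of a multilinear function series. -/
def const (F : MLS B) : B := F 0 Fin.elim0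

/-- `F` is a multilinear function series (over the base ring `R`): every component
agrees with an `R`-multilinear map. -/
def IsMultilinear (R : Type*) [CommRing R] {B : Type*} [Ring B] [Algebra R B]
    (F : MLS B) : Prop :=
  ∀ n : ℕ, ∃ M : MultilinearMap R (fun _ : Fin n => B) B, ∀ b : Fin n → B, M b = F n b

/-- Componentwise sum of multilinear function series. -/
def add [Ring B] (F G : MLS B) : MLS B := fun n b => F n b + G n b

/-- Dykema's product of multilinear function series:
`(F·G)ₙ(b₁,…,bₙ) = ∑ₖ Fₖ(b₁,…,bₖ)·G_{n-k}(b_{k+1},…,bₙ)`. -/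
def mul [Ring B] (F G : MLS B) : MLS B := fun n b =>
  ∑ k : Fin (n + 1),
    F k.val (fun i : Fin k.val => b (Fin.castLE (Nat.lt_succ_iff.mp k.isLt) i)) *
      G (n - k.val) (fun i : Fin (n - k.val) =>
        b ⟨k.val + i.val, by have h1 := i.isLt; have h2 := k.isLt; omega⟩)

/-- The unit series `1`, with constant term `1` and vanishing higher terms. -/
def one [Ring B] : MLS B := fun n _ => if n = 0 then 1 else 0

/-- The identity series `I`, with `I₁(b) = b` and all other components zero. -/
def idS [Ring B] : MLS B := fun n b => if h : n = 1 then b ⟨0, by omega⟩ else 0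

/-- Composition of multilinear function series (appropriate when `const G = 0`):
`(F∘G)ₙ(b₁,…,bₙ) = ∑_{p₁+⋯+p_k=n, pᵢ ≥ 1} F_k(G_{p₁}(…), …, G_{p_k}(…))`,
with `(F∘G)₀ = F₀`. -/
def comp [Ring B] (F G : MLS B) : MLS B := fun n b =>
  ∑ c : Composition n,
    F c.length (fun i : Fin c.length =>
      G (c.blocksFun i) (fun j : Fin (c.blocksFun i) => b (c.embedding i j)))

end MLS

/-- An operator-valued probability space: a unital algebra `A` with a distinguished
unital subalgebra (given by the embedding `ι : B →ₐ[R] A`) and a conditional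
expectation `E : A → B`. -/
structure OVPS (R A B : Type*) [CommRing R] [Ring A] [Algebra R A] [Ring B] [Algebra R B] where
  ι : B →ₐ[R] A
  E : A →ₗ[R] B
  E_ι : ∀ b : B, E (ι b) = b
  E_bimodule : ∀ (b₁ b₂ : B) (a : A), E (ι b₁ * a * ι b₂) = b₁ * E a * b₂

/-- The operator-valued moment series `Φ_x = ∑ₙ E[x b₁ x ⋯ bₙ x]` of a random variable. -/
def OVPS.momentSeries {R A B : Type*} [CommRing R] [Ring A] [Algebra R A] [Ring B] [Algebra R B]
    (P : OVPS R A B) (x : A) : MLS B :=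
  fun n b => P.E (x * (List.ofFn fun i : Fin n => P.ι (b i) * x).prod)


theorem mls_apply_congr {B γ : Type*} (F : ∀ n, (Fin n → B) → γ) {m n : ℕ} (h : m = n)
    {v : Fin m → B} {w : Fin n → B}
    (hv : ∀ (i : ℕ) (him : i < m) (hin : i < n), v ⟨i, him⟩ = w ⟨i, hin⟩) :
    F m v = F n w := by
  subst h
  congr 1
  ext ⟨i, hi⟩
  exact hv i hi hi

/-- composition of multilinear function series is associative
(for series with vanishing constant terms where required). -/
theorem mls_comp_assoc {R B : Type*} [CommRing R] [Ring B] [Algebra R B]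
    (F G H : MLS B) (hF : MLS.IsMultilinear R F) (hG : MLS.IsMultilinear R G)
    (hH : MLS.IsMultilinear R H) (hG0 : MLS.const G = 0) (hH0 : MLS.const H = 0) :
    (F.comp G).comp H = F.comp (G.comp H) := by
    classical
  choose MF hMF using hF
  funext n v
  let f : (Σ a : Composition n, Composition a.length) → B := fun c =>
    MF c.2.length fun i => G (c.2.blocksFun i) fun j =>
      H (c.1.blocksFun (c.2.embedding i j)) fun k => v (c.1.embedding (c.2.embedding i j) k)
  let g : (Σ c : Composition n, ∀ i : Fin c.length, Composition (c.blocksFun i)) → B := fun c =>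
    MF c.1.length fun i =>
      G (c.2 i).length fun j =>
        H ((c.2 i).blocksFun j) fun k => v (c.1.embedding i ((c.2 i).embedding j k))
  suffices h : ∑ c, f c = ∑ c, g c by
    simpa only [MLS.comp, ← hMF, MultilinearMap.map_sum, Finset.sum_sigma',
      Finset.univ_sigma_univ, f, g] using h
  rw [← (Composition.sigmaEquivSigmaPi n).sum_comp]
  apply Finset.sum_congr rfl
  rintro ⟨a, b⟩ _
  dsimp [Composition.sigmaEquivSigmaPi, f, g]
  apply mls_apply_congr (fun m x => MF m x) (Composition.length_gather a b).symm
  intro i hi1 hi2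
  apply mls_apply_congr G (Composition.length_sigmaCompositionAux a b _).symm
  intro j hj1 hj2
  apply mls_apply_congr H (Composition.blocksFun_sigmaCompositionAux a b _ _).symm
  intro k hk1 hk2
  refine congr_arg v (Fin.ext ?_)
  dsimp [Composition.embedding]
  show a.sizeUpTo (b.sizeUpTo i + j) + k =
    (a.gather b).sizeUpTo i + ((a.sigmaCompositionAux b ⟨i, hi2⟩).sizeUpTo j + k)
  rw [Composition.sizeUpTo_sizeUpTo_add _ _ hi1 hj1, add_assoc]
end

section
/- A multilinear function series F over a unital algebra B with F_0 = 0 is invertible with respect to composition (i.e., there exists G with G_0 = 0 and F∘G = G∘F = I) if and only if the linear map F_1 : B → B is invertible. -/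
open scoped BigOperators

/-! ### Auxiliary development for the proof -/

namespace MLS

section Aux

variable {R : Type*} {B : Type*} [CommRing R] [Ring B] [Algebra R B]

/-- Congruence lemma for applying a series at equal indices. -/
protected theorem congr' (F : MLS B) {m n : ℕ} {v : Fin m → B} {w : Fin n → B}
    (h1 : m = n) (h2 : ∀ (i : ℕ) (him : i < m) (hin : i < n), v ⟨i, him⟩ = w ⟨i, hin⟩) :
    F m v = F n w := by
  subst n
  congr with ⟨i, hi⟩
  exact h2 i hi hi

/-- Applying a series along a composition. -/
def applyC (G : MLS B) {n : ℕ} (c : Composition n) (v : Fin n → B) : Fin c.length → B :=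
  fun i => G (c.blocksFun i) (v ∘ c.embedding i)

theorem comp_apply' (F G : MLS B) (n : ℕ) (v : Fin n → B) :
    (F.comp G) n v = ∑ c : Composition n, F c.length (G.applyC c v) := rfl

theorem applyC_ones (G : MLS B) (n : ℕ) :
    G.applyC (Composition.ones n) = fun v i =>
      G 1 fun _ => v (Fin.castLE (Composition.length_le _) i) := by
  funext v i
  apply MLS.congr' G (Composition.ones_blocksFun _ _)
  intro j hjn hj1
  obtain rfl : j = 0 := by omega
  refine congr_arg v ?_
  rw [Fin.ext_iff, Fin.coe_castLE, Composition.ones_embedding, Fin.val_mk]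

theorem applyC_single (G : MLS B) {n : ℕ} (hn : 0 < n) (v : Fin n → B) :
    G.applyC (Composition.single n hn) v = fun _j => G n v := by
  ext j
  refine MLS.congr' G (by simp) fun i hi1 hi2 => ?_
  dsimp [applyC]
  congr 1
  convert Composition.single_embedding hn ⟨i, hi2⟩ using 1
  cases' j with j_val j_property
  have : j_val = 0 := le_bot_iff.1 (Nat.lt_succ_iff.1 j_property)
  congr!
  simp
  subst this
  exact Fin.ext ((Composition.coe_embedding _ _ _).trans (by simp))

theorem applyC_update (G : MLS B) {n : ℕ} (c : Composition n)
    (j : Fin n) (v : Fin n → B) (z : B) :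
    G.applyC c (Function.update v j z) =
      Function.update (G.applyC c v) (c.index j)
        (G (c.blocksFun (c.index j))
          (Function.update (v ∘ c.embedding (c.index j)) (c.invEmbedding j) z)) := by
  ext k
  by_cases h : k = c.index j
  · rw [h]
    let r : Fin (c.blocksFun (c.index j)) → Fin n := c.embedding (c.index j)
    simp only [Function.update_self]
    change G (c.blocksFun (c.index j)) (Function.update v j z ∘ r) = _
    let j' := c.invEmbedding j
    suffices B' : Function.update v j z ∘ r = Function.update (v ∘ r) j' z by rw [B']
    suffices C : Function.update v (r j') z ∘ r = Function.update (v ∘ r) j' z by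
      convert C; exact (c.embedding_comp_inv j).symm
    exact Function.update_comp_eq_of_injective _ (c.embedding _).injective _ _
  · simp only [h, Function.update_eq_self, Function.update_of_ne, Ne, not_false_iff]
    let r : Fin (c.blocksFun k) → Fin n := c.embedding k
    change G (c.blocksFun k) (Function.update v j z ∘ r) = G (c.blocksFun k) (v ∘ r)
    suffices B' : Function.update v j z ∘ r = v ∘ r by rw [B']
    apply Function.update_comp_eq_of_notMem_range
    rwa [c.mem_range_embedding_iff']

variable (R) in
/-- A single component is multilinear. -/
def IsML {n : ℕ} (f : (Fin n → B) → B) : Prop :=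
  ∃ M : MultilinearMap R (fun _ : Fin n => B) B, ∀ v, M v = f v

theorem IsML.sub {n : ℕ} {f g : (Fin n → B) → B} (hf : IsML R f) (hg : IsML R g) :
    IsML R (fun v => f v - g v) := by
  obtain ⟨Mf, hMf⟩ := hf
  obtain ⟨Mg, hMg⟩ := hg
  exact ⟨Mf - Mg, fun v => by simp [hMf, hMg]⟩

theorem IsML.compLinear {n : ℕ} {f : (Fin n → B) → B} (hf : IsML R f) (e : B →ₗ[R] B) :
    IsML R (fun v => e (f v)) := by
  obtain ⟨Mf, hMf⟩ := hf
  exact ⟨e.compMultilinearMap Mf, fun v => by simp [hMf]⟩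

theorem isML_sum {n : ℕ} {ι : Type*} (s : Finset ι) (f : ι → (Fin n → B) → B)
    (h : ∀ i ∈ s, IsML R (f i)) : IsML R (fun v => ∑ i ∈ s, f i v) := by
  refine ⟨∑ i ∈ s.attach, (h i.1 i.2).choose, fun v => ?_⟩
  show _ = ∑ i ∈ s, f i v
  rw [MultilinearMap.sum_apply, ← Finset.sum_attach s (fun i => f i v)]
  exact Finset.sum_congr rfl fun i _ => (h i.1 i.2).choose_spec v

theorem isML_idS (n : ℕ) : IsML R (idS (B := B) n) := by
  rcases eq_or_ne n 1 with rfl | h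
  · refine ⟨{ toFun := fun v => v 0
              map_update_add' := ?_
              map_update_smul' := ?_ }, ?_⟩
    · intro dec m i x y
      cases Subsingleton.elim dec (instDecidableEqFin _)
      have hi : i = 0 := Subsingleton.elim _ _
      subst hi
      simp
    · intro dec m i c x
      cases Subsingleton.elim dec (instDecidableEqFin _)
      have hi : i = 0 := Subsingleton.elim _ _
      subst hi
      simp
    · intro v
      show v 0 = idS 1 v
      simp only [idS, dif_pos]
      exact congr_arg v (Subsingleton.elim _ _)
  · exact ⟨0, fun v => by simp [idS, h]⟩

theorem isML_applyC_comp {n : ℕ} (F G : MLS B) (c : Composition n)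
    (hF : IsML R (F c.length)) (hG : ∀ i : Fin c.length, IsML R (G (c.blocksFun i))) :
    IsML R (fun v : Fin n → B => F c.length (G.applyC c v)) := by
  obtain ⟨M, hM⟩ := hF
  choose N hN using hG
  refine ⟨{ toFun := fun v => F c.length (G.applyC c v)
            map_update_add' := ?_
            map_update_smul' := ?_ }, fun v => rfl⟩
  · intro dec v i x y
    cases Subsingleton.elim dec (instDecidableEqFin _)
    simp only [applyC_update, ← hM, ← hN, MultilinearMap.map_update_add]
  · intro dec v i r x
    cases Subsingleton.elim dec (instDecidableEqFin _)
    simp only [applyC_update, ← hM, ← hN, MultilinearMap.map_update_smul]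

theorem blocksFun_lt {n : ℕ} (c : Composition n) (hc : 1 < c.length) (i : Fin c.length) :
    c.blocksFun i < n := by
  have hn : 0 < n := by
    rcases Nat.eq_zero_or_pos n with rfl | h
    · exact absurd (lt_of_lt_of_le hc c.length_le) (by omega)
    · exact h
  have hne : c ≠ Composition.single n hn := by
    intro h
    rw [h, Composition.single_length] at hc
    omega
  exact (Composition.ne_single_iff hn).1 hne i

/-- The recursively defined right inverse of a series with invertible linear part. -/
noncomputable def rinv (F : MLS B) (e : B ≃ₗ[R] B) : (n : ℕ) → (Fin n → B) → B
  | 0 => fun _ => 0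
  | (n + 1) => fun v =>
      e.symm (idS (n + 1) v - ∑ c : {c : Composition (n + 1) // 1 < c.length},
        F c.1.length (fun i => rinv F e (c.1.blocksFun i) (fun j => v (c.1.embedding i j))))
  termination_by n => n
  decreasing_by exact blocksFun_lt c.1 c.2 i

theorem rinv_zero (F : MLS B) (e : B ≃ₗ[R] B) (v : Fin 0 → B) : rinv F e 0 v = 0 := by
  rw [rinv]

theorem rinv_succ (F : MLS B) (e : B ≃ₗ[R] B) (n : ℕ) (v : Fin (n + 1) → B) :
    rinv F e (n + 1) v = e.symm (idS (n + 1) v - ∑ c : {c : Composition (n + 1) // 1 < c.length},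
      F c.1.length (applyC (rinv F e) c.1 v)) := by
  rw [rinv]
  rfl

theorem isML_rinv (F : MLS B) (hF : IsMultilinear R F) (e : B ≃ₗ[R] B) :
    IsMultilinear R (rinv F e) := by
  intro n
  induction n using Nat.strong_induction_on with
  | _ n ih =>
    match n with
    | 0 => exact ⟨0, fun v => by simp [rinv_zero]⟩
    | (m + 1) =>
      have h1 : IsML R (fun v : Fin (m + 1) → B => idS (B := B) (m + 1) v -
          ∑ c : {c : Composition (m + 1) // 1 < c.length},
            F c.1.length (applyC (rinv F e) c.1 v)) :=
        (isML_idS _).sub (isML_sum _ _ fun c _ =>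
          isML_applyC_comp F _ c.1 (hF c.1.length) (fun i => ih _ (blocksFun_lt c.1 c.2 i)))
      obtain ⟨M, hM⟩ := h1.compLinear e.symm.toLinearMap
      exact ⟨M, fun v => by rw [hM]; exact (rinv_succ F e m v).symm⟩

theorem comp_rinv (F : MLS B) (e : B ≃ₗ[R] B) (he : ∀ b, F 1 (fun _ => b) = e b)
    (hF0 : MLS.const F = 0) : F.comp (rinv F e) = idS := by
  funext n v
  match n with
  | 0 =>
    rw [comp_apply', Finset.sum_eq_zero]
    · simp [idS]
    · intro c _
      have h0 : c.length = 0 := Nat.le_zero.1 c.length_le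
      calc F c.length (applyC (rinv F e) c v)
          = F 0 Fin.elim0 := MLS.congr' F h0 (fun i _ hin => absurd hin (Nat.not_lt_zero i))
        _ = 0 := hF0
  | (m + 1) =>
    have hn : 0 < m + 1 := Nat.succ_pos m
    rw [comp_apply',
      ← Finset.sum_filter_add_sum_filter_not Finset.univ (fun c : Composition (m + 1) => 1 < c.length)]
    have hset : Finset.univ.filter (fun c : Composition (m + 1) => ¬ 1 < c.length) =
        {Composition.single (m + 1) hn} := by
      ext c
      simp only [Finset.mem_filter, Finset.mem_univ, true_and, Finset.mem_singleton]
      rw [Composition.eq_single_iff_length hn]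
      have := c.length_pos_of_pos hn
      omega
    have hsub : ∑ c ∈ Finset.univ.filter (fun c : Composition (m + 1) => 1 < c.length),
        F c.length (applyC (rinv F e) c v) =
        ∑ c : {c : Composition (m + 1) // 1 < c.length}, F c.1.length (applyC (rinv F e) c.1 v) :=
      Finset.sum_subtype _ (by simp) _
    rw [hset, Finset.sum_singleton, hsub]
    have hsingle : F (Composition.single (m + 1) hn).length
        (applyC (rinv F e) (Composition.single (m + 1) hn) v) = e (rinv F e (m + 1) v) := by
      rw [applyC_single]
      exact he (rinv F e (m + 1) v)
    rw [hsingle, rinv_succ, LinearEquiv.apply_symm_apply]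
    abel

theorem idS_comp (G : MLS B) (hG0 : MLS.const G = 0) : (idS : MLS B).comp G = G := by
  funext n v
  match n with
  | 0 =>
    rw [comp_apply', Finset.sum_eq_zero]
    · have : v = Fin.elim0 := Subsingleton.elim _ _
      rw [this]
      exact hG0.symm
    · intro c _
      have h0 : c.length = 0 := Nat.le_zero.1 c.length_le
      simp [idS, h0]
  | (m + 1) =>
    rw [comp_apply', Fintype.sum_eq_single (Composition.single (m + 1) (Nat.succ_pos m))]
    · rw [applyC_single]
      simp [idS]
    · intro c hc
      have : c.length ≠ 1 := fun h => hc ((Composition.eq_single_iff_length _).2 h)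
      simp [idS, this]

theorem comp_idS (F : MLS B) (hF : IsMultilinear R F) : F.comp (idS : MLS B) = F := by
  funext n v
  rw [comp_apply', Fintype.sum_eq_single (Composition.ones n)]
  · rw [applyC_ones]
    have h1 : ∀ i : Fin (Composition.ones n).length,
        idS 1 (fun _ : Fin 1 => v (Fin.castLE (Composition.length_le _) i)) =
          v (Fin.castLE (Composition.length_le _) i) := by
      intro i
      simp [idS]
    apply MLS.congr' F (Composition.ones_length n)
    intro i hi1 hi2
    show idS 1 (fun _ => v (Fin.castLE (Composition.length_le _) ⟨i, hi1⟩)) = v ⟨i, hi2⟩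
    have hv : v (Fin.castLE (Composition.length_le (Composition.ones n)) ⟨i, hi1⟩) = v ⟨i, hi2⟩ :=
      congr_arg v (Fin.ext rfl)
    simp [idS, hv]
  · intro c hc
    obtain ⟨M, hM⟩ := hF c.length
    obtain ⟨k, hkmem, hk⟩ := (Composition.ne_ones_iff.1 hc)
    obtain ⟨idx, hidx⟩ := List.get_of_mem hkmem
    have hbf : 1 < c.blocksFun idx := by
      rw [Composition.blocksFun, hidx]; exact hk
    rw [← hM]
    refine M.map_coord_zero idx ?_
    show idS (c.blocksFun idx) (v ∘ c.embedding idx) = 0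
    simp [idS, Nat.ne_of_gt hbf]

theorem comp_assoc (F G H : MLS B) (hF : IsMultilinear R F) :
    (F.comp G).comp H = F.comp (G.comp H) := by
  funext n v
  let f : (Σ a : Composition n, Composition a.length) → B := fun c =>
    F c.2.length (G.applyC c.2 (H.applyC c.1 v))
  let g : (Σ c : Composition n, ∀ i : Fin c.length, Composition (c.blocksFun i)) → B := fun c =>
    F c.1.length fun i : Fin c.1.length =>
      G (c.2 i).length (H.applyC (c.2 i) (v ∘ c.1.embedding i))
  suffices hfg : ∑ c, f c = ∑ c, g c by
    calc ((F.comp G).comp H) n v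
        = ∑ a : Composition n, ∑ b : Composition a.length,
            F b.length (G.applyC b (H.applyC a v)) := by
          rw [comp_apply']
          exact Finset.sum_congr rfl fun a _ => comp_apply' F G a.length (H.applyC a v)
      _ = ∑ c, f c := by rw [← Finset.univ_sigma_univ, Finset.sum_sigma]
      _ = ∑ c, g c := hfg
      _ = ∑ c : Composition n, ∑ d : (∀ i : Fin c.length, Composition (c.blocksFun i)),
            F c.length (fun i => G (d i).length (H.applyC (d i) (v ∘ c.embedding i))) := by
          rw [← Finset.univ_sigma_univ, Finset.sum_sigma]
      _ = (F.comp (G.comp H)) n v := by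
          rw [comp_apply']
          refine Finset.sum_congr rfl fun c _ => ?_
          obtain ⟨M, hM⟩ := hF c.length
          have hACC : (G.comp H).applyC c v = fun i =>
              ∑ d : Composition (c.blocksFun i), G d.length (H.applyC d (v ∘ c.embedding i)) := by
            funext i
            exact comp_apply' G H _ _
          rw [← hM, hACC, M.map_sum]
          exact Finset.sum_congr rfl fun d _ => (hM _).symm
  rw [← (Composition.sigmaEquivSigmaPi n).sum_comp]
  apply Finset.sum_congr rfl
  rintro ⟨a, b⟩ _
  dsimp only [f, g, Composition.sigmaEquivSigmaPi, Equiv.coe_fn_mk]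
  apply MLS.congr' F (Composition.length_gather a b).symm
  intro i hi1 hi2
  apply MLS.congr' G (Composition.length_sigmaCompositionAux a b _).symm
  intro j hj1 hj2
  apply MLS.congr' H (Composition.blocksFun_sigmaCompositionAux a b _ _).symm
  intro k hk1 hk2
  refine congr_arg v (Fin.ext ?_)
  simp only [Function.comp_apply, Composition.coe_embedding, Fin.val_mk]
  rw [Composition.sizeUpTo_sizeUpTo_add _ _ hi1 hj1, add_assoc]

theorem comp_one' (F G : MLS B) (v : Fin 1 → B) :
    (F.comp G) 1 v = F 1 (fun _ => G 1 (fun _ => v 0)) := by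
  have huniv : ({Composition.ones 1} : Finset (Composition 1)) = Finset.univ :=
    Finset.eq_univ_of_card _ (by simp [composition_card])
  rw [comp_apply', ← huniv, Finset.sum_singleton]
  apply MLS.congr' F (by simp)
  intro i hi1 hi2
  show G ((Composition.ones 1).blocksFun _) _ = _
  apply MLS.congr' G (by simp)
  intro j hj1 hj2
  exact congr_arg v (Subsingleton.elim _ _)

end Aux

end MLS

/-- a multilinear function series `F` with `F₀ = 0` has a compositional
inverse (with vanishing constant term) iff its linear part `F₁ : B → B` is invertible. -/
theorem mls_comp_invertible_iff {R B : Type*} [CommRing R] [Ring B] [Algebra R B]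
    (F : MLS B) (hF : MLS.IsMultilinear R F) (hF0 : MLS.const F = 0) :
    (∃ G : MLS B, MLS.IsMultilinear R G ∧ MLS.const G = 0 ∧
        F.comp G = MLS.idS ∧ G.comp F = MLS.idS) ↔
      Function.Bijective (fun b : B => F 1 (fun _ => b)) := by
  constructor
  · rintro ⟨G, hG, hG0, hFG, hGF⟩
    have h1 : ∀ b : B, F 1 (fun _ => G 1 (fun _ => b)) = b := by
      intro b
      have := congrFun (congrFun hFG 1) (fun _ => b)
      rw [MLS.comp_one'] at this
      simpa [MLS.idS] using this
    have h2 : ∀ b : B, G 1 (fun _ => F 1 (fun _ => b)) = b := by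
      intro b
      have := congrFun (congrFun hGF 1) (fun _ => b)
      rw [MLS.comp_one'] at this
      simpa [MLS.idS] using this
    exact Function.bijective_iff_has_inverse.2 ⟨fun b => G 1 (fun _ => b), h2, h1⟩
  · intro hbij
    obtain ⟨M₁, hM₁⟩ := hF 1
    have hupd : ∀ b : B, (fun _ : Fin 1 => b) = Function.update (fun _ : Fin 1 => (0 : B)) 0 b := by
      intro b
      funext j
      rw [Subsingleton.elim j 0]
      simp
    have hFM : ∀ b : B, F 1 (fun _ => b) = M₁ (Function.update (fun _ : Fin 1 => (0 : B)) 0 b) := by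
      intro b
      rw [← hupd, hM₁]
    let L : B →ₗ[R] B :=
      { toFun := fun b => F 1 (fun _ => b)
        map_add' := fun x y => by
          simp only [hFM, MultilinearMap.map_update_add]
        map_smul' := fun r x => by
          simp only [hFM, MultilinearMap.map_update_smul, RingHom.id_apply] }
    let e : B ≃ₗ[R] B := LinearEquiv.ofBijective L hbij
    have he : ∀ b : B, F 1 (fun _ => b) = e b := fun b => rfl
    set G : MLS B := MLS.rinv F e with hGdef
    have hGml : MLS.IsMultilinear R G := MLS.isML_rinv F hF e
    have hG0 : MLS.const G = 0 := MLS.rinv_zero F e Fin.elim0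
    have hFG : F.comp G = MLS.idS := MLS.comp_rinv F e he hF0
    have hG1 : ∀ b : B, G 1 (fun _ => b) = e.symm b := by
      intro b
      haveI : IsEmpty {c : Composition 1 // 1 < c.length} :=
        ⟨fun c => absurd c.2 (by have := c.1.length_le; omega)⟩
      have h := MLS.rinv_succ F e 0 (fun _ : Fin 1 => b)
      rw [Finset.univ_eq_empty, Finset.sum_empty] at h
      rw [hGdef, h]
      simp [MLS.idS]
    set H : MLS B := MLS.rinv G e.symm with hHdef
    have hH0 : MLS.const H = 0 := MLS.rinv_zero G e.symm Fin.elim0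
    have hGH : G.comp H = MLS.idS := MLS.comp_rinv G e.symm hG1 hG0
    have hFH : F = H := by
      calc F = F.comp MLS.idS := (MLS.comp_idS F hF).symm
        _ = F.comp (G.comp H) := by rw [hGH]
        _ = (F.comp G).comp H := (MLS.comp_assoc F G H hF).symm
        _ = MLS.idS.comp H := by rw [hFG]
        _ = H := MLS.idS_comp H hH0
    refine ⟨G, hGml, hG0, hFG, ?_⟩
    rw [hFH]
    exact hGH
end

section
/- For a random variable x in an operator-valued probability space (A, B, E), the moment series Φ_x and the cumulant series C_x satisfy the relation Φ_x = C_x ∘ (I + I·Φ_x·I) · (1 + I·Φ_x), where this identity of multilinear function series is equivalent to the moment-cumulant recursion E[x b_1 x ··· b_n x] = Σ_{k=0}^n Σ_{1≤q_1<···<q_k≤n} κ(x E[b_1 x···x b_{q_1}], x E[b_{q_1+1} x···x b_{q_2}], ..., x) · E[b_{q_k+1} x ··· b_n x]. -/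
open scoped BigOperators

/-- The moment-cumulant recursion: `C` is the cumulant series of `x`, i.e. for all `n`,
`E[x b₁ x ⋯ bₙ x] = ∑ₖ ∑_{1≤q₁<⋯<q_k≤n} κ(x E[b₁x⋯xb_{q₁}], …, x)·E[b_{q_k+1}x⋯bₙx]`,
where `κ(x c₁, …, x c_k, x) = C_k(c₁,…,c_k)`. -/
def OVPS.CumulantRecursion {R A B : Type*} [CommRing R] [Ring A] [Algebra R A]
    [Ring B] [Algebra R B] (P : OVPS R A B) (x : A) (C : MLS B) : Prop :=
  ∀ (n : ℕ) (b : Fin n → B),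
    P.E (x * (List.ofFn fun i : Fin n => P.ι (b i) * x).prod)
      = ∑ s : Finset (Fin n),
          (let k := s.card
           let bb : ℕ → B := fun i => if h : i < n then b ⟨i, h⟩ else 0
           -- `q j` is the `j`-th cut point `q_{j+1} - 1` (`0`-indexed)
           let q : Fin k → ℕ := fun j => ((s.orderIsoOfFin rfl) j : Fin n).val
           -- left end of the `j`-th segment
           let start : Fin k → ℕ := fun j =>
             if j.val = 0 then 0 else q ⟨j.val - 1, by have := j.isLt; omega⟩ + 1
           -- left end of the tail segment
           let ts : ℕ := if hk : k = 0 then 0 else q ⟨k - 1, by omega⟩ + 1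
           C k (fun j : Fin k =>
               P.E (P.ι (bb (start j)) *
                 (List.ofFn fun i : Fin (q j - start j) =>
                   x * P.ι (bb (start j + 1 + i))).prod)) *
             P.E ((List.ofFn fun i : Fin (n - ts) => P.ι (bb (ts + i)) * x).prod))

section Aux

variable {R A B : Type*} [CommRing R] [Ring A] [Algebra R A] [Ring B] [Algebra R B]

namespace OVPS

variable (P : OVPS R A B) (x : A)

lemma E_one : P.E 1 = 1 := by
  have := P.E_ι 1
  rwa [map_one] at this

lemma E_left (b : B) (a : A) : P.E (P.ι b * a) = b * P.E a := by
  have := P.E_bimodule b 1 a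
  simpa using this

/-- Pulling the leading `x` out of a product of `x·ι c` factors. -/
lemma prod_xl : ∀ (m : ℕ) (c : Fin (m+1) → A),
    (List.ofFn fun i : Fin (m+1) => x * c i).prod
      = x * (List.ofFn fun i : Fin m => c i.castSucc * x).prod * c (Fin.last m) := by
  intro m
  induction m with
  | zero => intro c; simp
  | succ m ih =>
    intro c
    rw [List.ofFn_succ, List.prod_cons, ih (fun i => c i.succ)]
    rw [List.ofFn_succ (f := fun i : Fin (m+1) => c i.castSucc * x), List.prod_cons]
    simp only [Fin.succ_castSucc, Fin.castSucc_zero, Fin.succ_last]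
    simp [mul_assoc]

end OVPS
end Aux
section Aux2

variable {R A B : Type*} [CommRing R] [Ring A] [Algebra R A] [Ring B] [Algebra R B]

namespace OVPS

variable (P : OVPS R A B) (x : A)

lemma arg_eval (s p : ℕ) (bb : ℕ → B) :
    P.E (P.ι (bb s) * (List.ofFn fun i : Fin (p+1) => x * P.ι (bb (s+1+↑i))).prod)
      = bb s * P.momentSeries x p (fun i => bb (s+1+↑i)) * bb (s+1+p) := by
  rw [OVPS.prod_xl x p (fun i => P.ι (bb (s+1+↑i)))]
  simp only [Fin.coe_castSucc, Fin.val_last]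
  rw [show P.ι (bb s) * (x * (List.ofFn fun i : Fin p => P.ι (bb (s+1+↑i)) * x).prod
        * P.ι (bb (s+1+p)))
      = P.ι (bb s) * (x * (List.ofFn fun i : Fin p => P.ι (bb (s+1+↑i)) * x).prod)
        * P.ι (bb (s+1+p)) by simp [mul_assoc]]
  rw [P.E_bimodule]
  rfl

lemma arg_eval_zero (s : ℕ) (bb : ℕ → B) :
    P.E (P.ι (bb s) * (List.ofFn fun i : Fin 0 => x * P.ι (bb (s+1+↑i))).prod) = bb s := by
  simp [P.E_ι]

lemma tail_eval (t m : ℕ) (bb : ℕ → B) :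
    P.E ((List.ofFn fun i : Fin (m+1) => P.ι (bb (t+↑i)) * x).prod)
      = bb t * P.momentSeries x m (fun i => bb (t+1+↑i)) := by
  rw [List.ofFn_succ, List.prod_cons]
  have h : (fun i : Fin m => P.ι (bb (t+↑i.succ)) * x) = fun i : Fin m => P.ι (bb (t+1+↑i)) * x := by
    funext i
    have : t + ↑i.succ = t + 1 + ↑i := by simp [Fin.val_succ]; omega
    rw [this]
  rw [h, mul_assoc, P.E_left]
  rfl

lemma tail_eval_zero : P.E ((List.ofFn fun i : Fin 0 => P.ι (0 : B) * x).prod) = 1 := by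
  simp [P.E_one]

end OVPS
end Aux2
section Aux3

variable {B : Type*} [Ring B]

namespace MLS

lemma apply_congr (F : MLS B) {m m' : ℕ} (h : m = m') (f : Fin m → B) (f' : Fin m' → B)
    (hf : ∀ i : Fin m', f (Fin.cast h.symm i) = f' i) : F m f = F m' f' := by
  subst h
  exact congrArg _ (funext fun i => hf i)

lemma idS_mul_succ (F : MLS B) (m : ℕ) (c : Fin (m+1) → B) :
    (MLS.idS.mul F) (m+1) c
      = c ⟨0, Nat.succ_pos m⟩ * F m (fun i => c ⟨1+↑i, by omega⟩) := by
  rw [MLS.mul]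
  rw [Finset.sum_eq_single_of_mem (⟨1, by omega⟩ : Fin (m+2)) (Finset.mem_univ _)]
  · rfl
  · intro k _ hk
    have : k.val ≠ 1 := fun h => hk (Fin.ext h)
    simp only [MLS.idS]
    rw [dif_neg this, zero_mul]

lemma idS_mul_zero (F : MLS B) (c : Fin 0 → B) : (MLS.idS.mul F) 0 c = 0 := by
  rw [MLS.mul]
  simp [MLS.idS]

lemma mul_idS_succ (F : MLS B) (m : ℕ) (c : Fin (m+1) → B) :
    (F.mul MLS.idS) (m+1) c
      = F m (fun i => c ⟨↑i, by omega⟩) * c ⟨m, by omega⟩ := by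
  rw [MLS.mul]
  rw [Finset.sum_eq_single_of_mem (⟨m, by omega⟩ : Fin (m+2)) (Finset.mem_univ _)]
  · have h1 : m + 1 - m = 1 := by omega
    congr 1
    refine (apply_congr MLS.idS h1 _ (fun i : Fin 1 => c ⟨m + ↑i, by omega⟩) (fun i => rfl)).trans ?_
    rfl
  · intro k _ hk
    have : k.val ≠ m := fun h => hk (Fin.ext h)
    have h2 : m + 1 - k.val ≠ 1 := by omega
    simp only [MLS.idS]
    rw [dif_neg h2, mul_zero]

lemma mul_idS_zero (F : MLS B) (c : Fin 0 → B) : (F.mul MLS.idS) 0 c = 0 := by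
  rw [MLS.mul]
  simp [MLS.idS]

lemma H_zero (F : MLS B) (c : Fin 0 → B) :
    (MLS.one.add (MLS.idS.mul F)) 0 c = 1 := by
  rw [MLS.add, idS_mul_zero, MLS.one]
  simp

lemma H_succ (F : MLS B) (m : ℕ) (c : Fin (m+1) → B) :
    (MLS.one.add (MLS.idS.mul F)) (m+1) c
      = c ⟨0, Nat.succ_pos m⟩ * F m (fun i => c ⟨1+↑i, by omega⟩) := by
  rw [MLS.add, idS_mul_succ, MLS.one]
  simp

lemma G_one (F : MLS B) (c : Fin 1 → B) :
    (MLS.idS.add ((MLS.idS.mul F).mul MLS.idS)) 1 c = c ⟨0, Nat.one_pos⟩ := by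
  rw [MLS.add, mul_idS_succ, idS_mul_zero, MLS.idS]
  simp

lemma G_succ (F : MLS B) (m : ℕ) (c : Fin (m+2) → B) :
    (MLS.idS.add ((MLS.idS.mul F).mul MLS.idS)) (m+2) c
      = c ⟨0, by omega⟩ * F m (fun i => c ⟨1+↑i, by omega⟩) * c ⟨m+1, by omega⟩ := by
  rw [MLS.add, mul_idS_succ, idS_mul_succ, MLS.idS]
  rw [dif_neg (by omega)]
  simp

end MLS
end Aux3
section Aux4

variable {R A B : Type*} [CommRing R] [Ring A] [Algebra R A] [Ring B] [Algebra R B]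
variable (P : OVPS R A B) (x : A)

/-- clamped version of `b`. -/
def bbOf {n : ℕ} (b : Fin n → B) : ℕ → B := fun i => if h : i < n then b ⟨i, h⟩ else 0

lemma bbOf_lt {n : ℕ} (b : Fin n → B) {i : ℕ} (h : i < n) : bbOf b i = b ⟨i, h⟩ := dif_pos h

lemma ofFn_cast {α : Type*} {m m' : ℕ} (h : m = m') (f : Fin m → α) (f' : Fin m' → α)
    (hf : ∀ i : Fin m', f (Fin.cast h.symm i) = f' i) : List.ofFn f = List.ofFn f' := by
  subst h
  exact congrArg _ (funext fun i => hf i)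

lemma tail_lemma {n : ℕ} (t : ℕ) (ht : t ≤ n) (b : Fin n → B) :
    P.E ((List.ofFn fun i : Fin (n - t) => P.ι (bbOf b (t + ↑i)) * x).prod)
      = (MLS.one.add (MLS.idS.mul (P.momentSeries x))) (n - t)
          (fun i : Fin (n - t) => b ⟨t + ↑i, by omega⟩) := by
  rcases Nat.lt_or_ge t n with h | h
  · have hm : n - t = (n - t - 1) + 1 := by omega
    set m := n - t - 1 with hmdef
    rw [ofFn_cast hm _ (fun i : Fin (m+1) => P.ι (bbOf b (t + ↑i)) * x) (fun i => rfl)]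
    rw [MLS.apply_congr (MLS.one.add (MLS.idS.mul (P.momentSeries x))) hm _ (fun i : Fin (m+1) => b ⟨t + ↑i, by omega⟩) (fun i => rfl)]
    rw [MLS.H_succ, P.tail_eval]
    refine congrArg₂ (· * ·) ?_ ?_
    · rw [bbOf_lt b h]
      exact congrArg b (Fin.ext (by simp))
    · exact congrArg (P.momentSeries x m) (funext fun i => by
        rw [bbOf_lt b (show t + 1 + ↑i < n by omega)]
        exact congrArg b (Fin.ext (by simp; omega)))
  · have hm : n - t = 0 := by omega
    rw [ofFn_cast hm _ (fun i : Fin 0 => P.ι (bbOf b (t + ↑i)) * x) (fun i => rfl)]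
    rw [MLS.apply_congr (MLS.one.add (MLS.idS.mul (P.momentSeries x))) hm _ (fun i : Fin 0 => b ⟨t + ↑i, by omega⟩) (fun i => rfl)]
    rw [MLS.H_zero]
    simp [P.E_one]

lemma arg_lemma {n : ℕ} (u p : ℕ) (hup : u + p < n) (b : Fin n → B) :
    P.E (P.ι (bbOf b u) * (List.ofFn fun i : Fin p => x * P.ι (bbOf b (u + 1 + ↑i))).prod)
      = (MLS.idS.add ((MLS.idS.mul (P.momentSeries x)).mul MLS.idS)) (p+1)
          (fun j : Fin (p+1) => b ⟨u + ↑j, by omega⟩) := by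
  rcases p with _ | m
  · rw [MLS.G_one, P.arg_eval_zero, bbOf_lt b (show u < n by omega)]
    exact congrArg b (Fin.ext (by simp))
  · rw [MLS.G_succ, P.arg_eval, bbOf_lt b (show u < n by omega)]
    refine congrArg₂ (· * ·) (congrArg₂ (· * ·) ?_ ?_) ?_
    · exact congrArg b (Fin.ext (by simp))
    · exact congrArg (P.momentSeries x m) (funext fun i => by
        rw [bbOf_lt b (show u + 1 + ↑i < n by omega)]
        exact congrArg b (Fin.ext (by simp; omega)))
    · rw [bbOf_lt b (show u + 1 + m < n by omega)]
      exact congrArg b (Fin.ext (by simp; omega))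

end Aux4
section Aux5

variable {n : ℕ}

/-- The strictly monotone map sending block `j` of a composition to its right endpoint. -/
def cutFun (k : Fin (n+1)) (c : Composition k.val) (j : Fin c.length) : Fin n :=
  ⟨c.sizeUpTo (↑j + 1) - 1, by
    have h1 := c.sizeUpTo_strict_mono j.isLt
    have h2 := c.sizeUpTo_le (↑j + 1)
    have h3 := k.isLt
    omega⟩

lemma cutFun_strictMono (k : Fin (n+1)) (c : Composition k.val) : StrictMono (cutFun k c) := by
  intro j j' hj
  have h1 : c.sizeUpTo (↑j + 1) ≤ c.sizeUpTo ↑j' :=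
    c.monotone_sizeUpTo (by exact hj)
  have h2 := c.sizeUpTo_strict_mono j'.isLt
  have h3 := c.sizeUpTo_strict_mono j.isLt
  have h0 : 0 ≤ c.sizeUpTo ↑j := Nat.zero_le _
  simp only [cutFun, Fin.mk_lt_mk]
  omega

/-- The finset of cut points associated to `(k, c)`. -/
def cutSet (k : Fin (n+1)) (c : Composition k.val) : Finset (Fin n) :=
  Finset.image (cutFun k c) Finset.univ

lemma cutSet_card (k : Fin (n+1)) (c : Composition k.val) : (cutSet k c).card = c.length := by
  rw [cutSet, Finset.card_image_of_injective _ (cutFun_strictMono k c).injective,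
    Finset.card_univ, Fintype.card_fin]

lemma cutSet_orderEmb (k : Fin (n+1)) (c : Composition k.val) :
    cutFun k c = (cutSet k c).orderEmbOfFin (cutSet_card k c) := by
  apply Finset.orderEmbOfFin_unique
  · intro j
    exact Finset.mem_image_of_mem _ (Finset.mem_univ j)
  · exact cutFun_strictMono k c

lemma cutSet_q (k : Fin (n+1)) (c : Composition k.val) (j : Fin (cutSet k c).card) :
    (((cutSet k c).orderIsoOfFin rfl j : Fin n) : ℕ)
      = c.sizeUpTo (↑j + 1) - 1 := by
  have h1 : (((cutSet k c).orderIsoOfFin rfl j : Fin n) : ℕ)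
      = (((cutSet k c).sort (· ≤ ·))[(j : ℕ)]'(by
          rw [Finset.length_sort]; exact j.isLt) : Fin n).val := rfl
  have hj' : (j : ℕ) < c.length := by
    have h := j.isLt
    have hcc := cutSet_card k c
    omega
  have h2 : ((cutSet k c).orderEmbOfFin (cutSet_card k c) ⟨(j : ℕ), hj'⟩ : Fin n)
      = (((cutSet k c).sort (· ≤ ·))[(j : ℕ)]'(by
          rw [Finset.length_sort]; have hcc := cutSet_card k c; omega) : Fin n) :=
    Finset.orderEmbOfFin_apply _ _ _
  rw [h1, ← h2, ← cutSet_orderEmb]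
  rfl

lemma sigma_injective :
    Function.Injective (fun p : Σ k : Fin (n+1), Composition k.val => cutSet p.1 p.2) := by
  rintro ⟨k, c⟩ ⟨k', c'⟩ h
  simp only at h
  -- lengths agree
  have hlen : c.length = c'.length := by
    rw [← cutSet_card k c, ← cutSet_card k' c', h]
  -- sizeUpTo agree
  have hsize : ∀ i : ℕ, i ≤ c.length → c.sizeUpTo i = c'.sizeUpTo i := by
    intro i hi
    induction i with
    | zero => simp [Composition.sizeUpTo_zero]
    | succ i ih =>
      have hi' : i < c.length := hi
      have hji : i < c'.length := hlen ▸ hi'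
      have e1 : cutFun k c ⟨i, hi'⟩ = cutFun k' c' ⟨i, hji⟩ := by
        rw [cutSet_orderEmb k c, cutSet_orderEmb k' c']
        have : ((cutSet k c).sort (· ≤ ·)) = ((cutSet k' c').sort (· ≤ ·)) := by rw [h]
        rw [Finset.orderEmbOfFin_apply, Finset.orderEmbOfFin_apply]
        simp only [this]
        rfl
      have e2 : c.sizeUpTo (i + 1) - 1 = c'.sizeUpTo (i + 1) - 1 := congrArg Fin.val e1
      have p1 := c.sizeUpTo_strict_mono hi'
      have p2 := c'.sizeUpTo_strict_mono hji
      have p3 : c.sizeUpTo i = c'.sizeUpTo i := ih (le_of_lt hi)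
      omega
  -- k = k'
  have hk : k = k' := by
    apply Fin.ext
    have e1 : c.sizeUpTo c.length = (k : ℕ) := c.sizeUpTo_length
    have e2 : c'.sizeUpTo c'.length = (k' : ℕ) := c'.sizeUpTo_length
    rw [← e1, ← e2, ← hlen, hsize c.length le_rfl]
  subst hk
  -- blocks agree
  have hblocks : c.blocks = c'.blocks := by
    apply List.ext_getElem hlen
    intro i h1 h2
    have b1 : c.sizeUpTo (i+1) = c.sizeUpTo i + c.blocksFun ⟨i, h1⟩ := c.sizeUpTo_succ h1
    have b2 : c'.sizeUpTo (i+1) = c'.sizeUpTo i + c'.blocksFun ⟨i, h2⟩ := c'.sizeUpTo_succ h2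
    have := hsize (i+1) h1
    have := hsize i (le_of_lt h1)
    simp only [Composition.blocksFun] at b1 b2
    have : c.blocks.get ⟨i, h1⟩ = c'.blocks.get ⟨i, h2⟩ := by omega
    simpa using this
  have hcc : c = c' := Composition.ext hblocks
  rw [hcc]

lemma sigma_card :
    Fintype.card (Σ k : Fin (n+1), Composition k.val) = Fintype.card (Finset (Fin n)) := by
  rw [Fintype.card_sigma, Fintype.card_finset, Fintype.card_fin]
  have : ∀ k : Fin (n+1), Fintype.card (Composition k.val) = 2 ^ ((k : ℕ) - 1) := by
    intro k; exact composition_card _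
  rw [Fintype.sum_congr _ _ this]
  clear this
  induction n with
  | zero => simp
  | succ n ih =>
    rw [Fin.sum_univ_castSucc]
    simp only [Fin.coe_castSucc, Fin.val_last]
    rw [ih]
    have : (2:ℕ) ^ (n + 1 - 1) = 2 ^ n := rfl
    rw [this]
    ring

lemma sigma_bijective :
    Function.Bijective (fun p : Σ k : Fin (n+1), Composition k.val => cutSet p.1 p.2) :=
  (Fintype.bijective_iff_injective_and_card _).mpr ⟨sigma_injective, sigma_card⟩

end Aux5
section Aux6

variable {R A B : Type*} [CommRing R] [Ring A] [Algebra R A] [Ring B] [Algebra R B]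

/-- The `j`-th cut point of a cut set. -/
def qOf {n : ℕ} (s : Finset (Fin n)) (j : Fin s.card) : ℕ :=
  ((s.orderIsoOfFin rfl) j : Fin n).val

/-- Left end of the `j`-th segment. -/
def startOf {n : ℕ} (s : Finset (Fin n)) (j : Fin s.card) : ℕ :=
  if j.val = 0 then 0 else qOf s ⟨j.val - 1, by have := j.isLt; omega⟩ + 1

/-- Left end of the tail segment. -/
def tsOf {n : ℕ} (s : Finset (Fin n)) : ℕ :=
  if hk : s.card = 0 then 0 else qOf s ⟨s.card - 1, by omega⟩ + 1

/-- The summand in the cumulant recursion, as a standalone function. -/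
def recBody (P : OVPS R A B) (x : A) (C : MLS B) (n : ℕ) (b : Fin n → B)
    (s : Finset (Fin n)) : B :=
  C s.card (fun j : Fin s.card =>
      P.E (P.ι (bbOf b (startOf s j)) *
        (List.ofFn fun i : Fin (qOf s j - startOf s j) =>
          x * P.ι (bbOf b (startOf s j + 1 + ↑i))).prod)) *
    P.E ((List.ofFn fun i : Fin (n - tsOf s) => P.ι (bbOf b (tsOf s + ↑i)) * x).prod)

lemma cumulantRecursion_iff (P : OVPS R A B) (x : A) (C : MLS B) :
    P.CumulantRecursion x C ↔ ∀ (n : ℕ) (b : Fin n → B),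
      P.E (x * (List.ofFn fun i : Fin n => P.ι (b i) * x).prod)
        = ∑ s : Finset (Fin n), recBody P x C n b s := Iff.rfl


lemma qOf_cut {n : ℕ} (k : Fin (n+1)) (c : Composition k.val) (j : Fin (cutSet k c).card) :
    qOf (cutSet k c) j = c.sizeUpTo (↑j + 1) - 1 := cutSet_q k c j

lemma len_pos_of_mem {n : ℕ} (k : Fin (n+1)) (c : Composition k.val)
    (j : Fin (cutSet k c).card) : 0 < c.length := by
  have h := j.isLt
  have hc := cutSet_card k c
  omega

lemma startOf_cut {n : ℕ} (k : Fin (n+1)) (c : Composition k.val)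
    (j : Fin (cutSet k c).card) : startOf (cutSet k c) j = c.sizeUpTo ↑j := by
  rw [startOf]
  by_cases h0 : (j : ℕ) = 0
  · rw [if_pos h0, h0, Composition.sizeUpTo_zero]
  · rw [if_neg h0, qOf_cut]
    have hlen : 0 < c.length := len_pos_of_mem k c j
    have hj : (j : ℕ) ≤ c.length := by
      have := j.isLt; have := cutSet_card k c; omega
    have h1 : ((⟨(j : ℕ) - 1, by have := j.isLt; omega⟩ : Fin (cutSet k c).card) : ℕ) + 1
        = (j : ℕ) := by simp; omega
    rw [h1]
    have h2 : c.sizeUpTo 0 < c.sizeUpTo 1 := c.sizeUpTo_strict_mono hlen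
    have h3 : c.sizeUpTo 1 ≤ c.sizeUpTo ↑j := c.monotone_sizeUpTo (by omega)
    have h4 := c.sizeUpTo_zero
    omega

lemma diff_cut {n : ℕ} (k : Fin (n+1)) (c : Composition k.val)
    (j : Fin (cutSet k c).card) (i : Fin c.length) (hij : (j : ℕ) = (i : ℕ)) :
    qOf (cutSet k c) j - startOf (cutSet k c) j = c.blocksFun i - 1 := by
  rw [qOf_cut, startOf_cut, hij]
  have h2 := c.sizeUpTo_succ' i
  have h3 := c.one_le_blocksFun i
  omega

lemma tsOf_cut {n : ℕ} (k : Fin (n+1)) (c : Composition k.val) :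
    tsOf (cutSet k c) = k.val := by
  rw [tsOf]
  have hc := cutSet_card k c
  by_cases h0 : (cutSet k c).card = 0
  · rw [dif_pos h0]
    have hlen : c.length = 0 := by omega
    have h1 := c.sizeUpTo_length
    rw [hlen, Composition.sizeUpTo_zero] at h1
    omega
  · rw [dif_neg h0, qOf_cut]
    have hlen : 0 < c.length := by omega
    have h1 : ((⟨(cutSet k c).card - 1, by omega⟩ : Fin (cutSet k c).card) : ℕ) + 1
        = c.length := by simp; omega
    rw [h1]
    have h2 := c.sizeUpTo_length
    have h3 : c.sizeUpTo 0 < c.sizeUpTo 1 := c.sizeUpTo_strict_mono hlen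
    have h4 : c.sizeUpTo 1 ≤ c.sizeUpTo c.length := c.monotone_sizeUpTo (by omega)
    have h5 := c.sizeUpTo_zero
    omega

lemma term_eq (P : OVPS R A B) (x : A) (C : MLS B) {n : ℕ} (b : Fin n → B)
    (k : Fin (n+1)) (c : Composition k.val) :
    recBody P x C n b (cutSet k c)
      = (C c.length fun i : Fin c.length =>
          (MLS.idS.add ((MLS.idS.mul (P.momentSeries x)).mul MLS.idS)) (c.blocksFun i)
            fun j : Fin (c.blocksFun i) =>
              b (Fin.castLE (Nat.lt_succ_iff.mp k.isLt) (c.embedding i j))) *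
        (MLS.one.add (MLS.idS.mul (P.momentSeries x))) (n - k.val)
          (fun i : Fin (n - k.val) =>
            b ⟨k.val + i.val, by have h1 := i.isLt; have h2 := k.isLt; omega⟩) := by
  have hcard := cutSet_card k c
  unfold recBody
  refine congrArg₂ (· * ·) ?_ ?_
  · refine MLS.apply_congr C hcard _ _ (fun i => ?_)
    show P.E (P.ι (bbOf b (startOf (cutSet k c) (Fin.cast hcard.symm i))) *
        (List.ofFn fun t : Fin (qOf (cutSet k c) (Fin.cast hcard.symm i)
            - startOf (cutSet k c) (Fin.cast hcard.symm i)) =>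
          x * P.ι (bbOf b (startOf (cutSet k c) (Fin.cast hcard.symm i) + 1 + ↑t))).prod) = _
    rw [diff_cut k c (Fin.cast hcard.symm i) i rfl, startOf_cut k c (Fin.cast hcard.symm i)]
    simp only [Fin.coe_cast]
    have hup : c.sizeUpTo ↑i + (c.blocksFun i - 1) < n := by
      have h2 := c.sizeUpTo_succ' i
      have h3 := c.one_le_blocksFun i
      have h4 := c.sizeUpTo_le (↑i + 1)
      have h5 := k.isLt
      omega
    rw [arg_lemma P x _ _ hup b]
    have hbf : c.blocksFun i - 1 + 1 = c.blocksFun i := by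
      have := c.one_le_blocksFun i; omega
    refine MLS.apply_congr _ hbf _ _ (fun j' => ?_)
    exact congrArg b (Fin.ext (by simp [Composition.coe_embedding]))
  · rw [tsOf_cut k c]
    exact tail_lemma P x ↑k (by have := k.isLt; omega) b

lemma key_sum (P : OVPS R A B) (x : A) (C : MLS B) (n : ℕ) (b : Fin n → B) :
    (∑ s : Finset (Fin n), recBody P x C n b s)
      = ((C.comp (MLS.idS.add ((MLS.idS.mul (P.momentSeries x)).mul MLS.idS))).mul
          (MLS.one.add (MLS.idS.mul (P.momentSeries x)))) n b := by
  rw [MLS.mul]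
  simp only [MLS.comp, Finset.sum_mul]
  have h1 : (∑ s : Finset (Fin n), recBody P x C n b s)
      = ∑ p : Σ k : Fin (n+1), Composition k.val,
          (C p.2.length fun i : Fin p.2.length =>
            (MLS.idS.add ((MLS.idS.mul (P.momentSeries x)).mul MLS.idS)) (p.2.blocksFun i)
              fun j : Fin (p.2.blocksFun i) =>
                b (Fin.castLE (Nat.lt_succ_iff.mp p.1.isLt) (p.2.embedding i j))) *
          (MLS.one.add (MLS.idS.mul (P.momentSeries x))) (n - p.1.val)
            (fun i : Fin (n - p.1.val) =>
              b ⟨p.1.val + i.val, by have h1 := i.isLt; have h2 := p.1.isLt; omega⟩) :=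
    (Fintype.sum_bijective _ sigma_bijective _ _
      (fun p => (term_eq P x C b p.1 p.2).symm)).symm
  rw [h1, ← Finset.univ_sigma_univ, Finset.sum_sigma]

end Aux6


/-- the moment series `Φ_x` and the cumulant series `C_x` satisfy
`Φ_x = C_x∘(I + I·Φ_x·I)·(1 + I·Φ_x)`; this identity of multilinear function series is
equivalent to the moment-cumulant recursion defining the cumulants. -/
theorem ovps_moment_cumulant_relation {R A B : Type*} [CommRing R] [Ring A] [Algebra R A]
    [Ring B] [Algebra R B] (P : OVPS R A B) (x : A) (C : MLS B)
    (hC : MLS.IsMultilinear R C) :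
    P.CumulantRecursion x C ↔
      P.momentSeries x =
        (C.comp (MLS.idS.add ((MLS.idS.mul (P.momentSeries x)).mul MLS.idS))).mul
          (MLS.one.add (MLS.idS.mul (P.momentSeries x))) := by
  
  rw [cumulantRecursion_iff]
  constructor
  · intro h
    funext n b
    exact (h n b).trans (key_sum P x C n b)
  · intro h n b
    have := congrFun (congrFun h n) b
    exact this.trans (key_sum P x C n b).symm
end

section
/- For a random variable x in an operator-valued probability space, the two moment-cumulant relations Φ_x = C_x ∘ (I + I·Φ_x·I) · (1 + I·Φ_x) and Φ_x = (1 + Φ_x·I) · C_x ∘ (I + I·Φ_x·I) are equivalent (each determines the same cumulant series C_x from Φ_x). -/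
open scoped BigOperators

/-!
Write `Φ` for the moment series, `D = C∘(I + I·Φ·I)`, `U = 1 + I·Φ` and `V = 1 + Φ·I`. The two
relations read `Φ = D·U` and `Φ = V·D`. The product of multilinear function series is
associative, unital and distributive, so `V·Φ = Φ + Φ·I·Φ = Φ·U` for every series `Φ`; and
`U`, `V` have constant term `1`, so they can be cancelled on either side by induction on the
degree. Hence `Φ = D·U` gives `(V·D)·U = V·Φ = Φ·U`, i.e. `V·D = Φ`, and symmetrically.
-/

theorem Finset.sum_range_succ_sum_range_succ_comm {M : Type*} [AddCommMonoid M] (n : ℕ)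
    (f : ℕ → ℕ → M) :
    ∑ k ∈ Finset.range (n + 1), ∑ j ∈ Finset.range (k + 1), f j k =
      ∑ j ∈ Finset.range (n + 1), ∑ m ∈ Finset.range (n - j + 1), f j (j + m) := by
  simp only [Finset.range_eq_Ico]
  rw [← Finset.sum_Ico_Ico_comm]
  refine Finset.sum_congr rfl fun j hj => ?_
  have hjn : j ≤ n := Nat.lt_succ_iff.mp (Finset.mem_Ico.mp hj).2
  rw [Finset.sum_Ico_eq_sum_range, show n + 1 - j = n - j + 1 by omega, Finset.range_eq_Ico]

namespace MLS

variable {B : Type*}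

/-- Evaluating on a sequence `ℕ → B` avoids the dependent index arithmetic of `Fin n`. -/
def applySeq (F : MLS B) (n : ℕ) (b : ℕ → B) : B := F n fun i => b i

theorem const_eq_applySeq_zero (F : MLS B) (b : ℕ → B) : F.const = F.applySeq 0 b := by
  simp only [const, applySeq]
  congr 1
  exact Subsingleton.elim _ _

theorem ext_applySeq [Zero B] {F G : MLS B}
    (h : ∀ n (b : ℕ → B), F.applySeq n b = G.applySeq n b) : F = G := by
  funext n b
  have hb : (fun i : Fin n => if hi : (i : ℕ) < n then b ⟨i, hi⟩ else 0) = b := by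
    funext i; simp [i.isLt]
  simpa only [applySeq, hb] using h n fun i => if hi : i < n then b ⟨i, hi⟩ else 0

variable [Ring B]

theorem applySeq_add (F G : MLS B) (n : ℕ) (b : ℕ → B) :
    (F.add G).applySeq n b = F.applySeq n b + G.applySeq n b := rfl

theorem applySeq_mul (F G : MLS B) (n : ℕ) (b : ℕ → B) :
    (F.mul G).applySeq n b =
      ∑ k ∈ Finset.range (n + 1), F.applySeq k b * G.applySeq (n - k) fun i => b (k + i) :=
  Fin.sum_univ_eq_sum_range (fun k => F.applySeq k b * G.applySeq (n - k) fun i => b (k + i)) _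

theorem applySeq_one (n : ℕ) (b : ℕ → B) :
    (one : MLS B).applySeq n b = if n = 0 then 1 else 0 := rfl

theorem const_add (F G : MLS B) : (F.add G).const = F.const + G.const := rfl

theorem const_mul (F G : MLS B) : (F.mul G).const = F.const * G.const := by
  simp only [const_eq_applySeq_zero _ fun _ => (0 : B), applySeq_mul]
  simp

theorem const_one : (one : MLS B).const = 1 := rfl

theorem const_idS : (idS : MLS B).const = 0 := rfl

theorem add_mul (F G H : MLS B) : (F.add G).mul H = (F.mul H).add (G.mul H) := by
  refine ext_applySeq fun n b => ?_
  simp only [applySeq_mul, applySeq_add, _root_.add_mul, Finset.sum_add_distrib]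

theorem mul_add (F G H : MLS B) : F.mul (G.add H) = (F.mul G).add (F.mul H) := by
  refine ext_applySeq fun n b => ?_
  simp only [applySeq_mul, applySeq_add, _root_.mul_add, Finset.sum_add_distrib]

theorem one_mul (F : MLS B) : one.mul F = F := by
  refine ext_applySeq fun n b => ?_
  rw [applySeq_mul, Finset.sum_eq_single 0]
  · simp [applySeq, one]
  · intro k _ hk
    simp [applySeq_one, hk]
  · simp

theorem mul_one (F : MLS B) : F.mul one = F := by
  refine ext_applySeq fun n b => ?_
  rw [applySeq_mul, Finset.sum_eq_single n]
  · simp [applySeq_one]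
  · intro k hk hkn
    have : n - k ≠ 0 := by have := Finset.mem_range.mp hk; omega
    simp [applySeq_one, this]
  · simp

theorem mul_assoc (F G H : MLS B) : (F.mul G).mul H = F.mul (G.mul H) := by
  refine ext_applySeq fun n b => ?_
  simp only [applySeq_mul, Finset.sum_mul, Finset.mul_sum]
  rw [Finset.sum_range_succ_sum_range_succ_comm n fun j k =>
    F.applySeq j b * G.applySeq (k - j) (fun i => b (j + i)) *
      H.applySeq (n - k) fun i => b (k + i)]
  refine Finset.sum_congr rfl fun j hj => Finset.sum_congr rfl fun m hm => ?_
  have hjn : j ≤ n := Nat.lt_succ_iff.mp (Finset.mem_range.mp hj)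
  have hmn : m ≤ n - j := Nat.lt_succ_iff.mp (Finset.mem_range.mp hm)
  have hshift : (fun i => b (j + m + i)) = fun i => b (j + (m + i)) := by
    funext i; rw [Nat.add_assoc]
  rw [Nat.add_sub_cancel_left, show n - (j + m) = n - j - m by omega, hshift, _root_.mul_assoc]

theorem mul_right_cancel {F G U : MLS B} (hU : IsRightRegular U.const)
    (h : F.mul U = G.mul U) : F = G := by
  refine ext_applySeq fun n => ?_
  induction n using Nat.strong_induction_on with
  | _ n ih =>
    intro b
    have hn := congrArg (fun X : MLS B => X.applySeq n b) h
    simp only [applySeq_mul] at hn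
    rw [Finset.sum_range_succ, Finset.sum_range_succ,
      Finset.sum_congr rfl fun k hk => by rw [ih k (Finset.mem_range.mp hk)]] at hn
    rw [Nat.sub_self, ← const_eq_applySeq_zero] at hn
    exact hU (add_left_cancel hn)

theorem mul_left_cancel {F G V : MLS B} (hV : IsLeftRegular V.const)
    (h : V.mul F = V.mul G) : F = G := by
  refine ext_applySeq fun n => ?_
  induction n using Nat.strong_induction_on with
  | _ n ih =>
    intro b
    have hn := congrArg (fun X : MLS B => X.applySeq n b) h
    simp only [applySeq_mul] at hn
    rw [Finset.sum_range_succ', Finset.sum_range_succ',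
      Finset.sum_congr rfl fun k hk => by
        rw [ih (n - (k + 1)) (by have := Finset.mem_range.mp hk; omega)]] at hn
    rw [← const_eq_applySeq_zero, Nat.sub_zero] at hn
    simp only [Nat.zero_add] at hn
    exact hV (add_left_cancel hn)

theorem one_add_mul_idS_mul (Φ : MLS B) :
    (one.add (Φ.mul idS)).mul Φ = Φ.mul (one.add (idS.mul Φ)) := by
  rw [add_mul, mul_add, one_mul, mul_one, mul_assoc]

theorem const_one_add_idS_mul (Φ : MLS B) : (one.add (idS.mul Φ)).const = 1 := by
  rw [const_add, const_mul, const_one, const_idS, zero_mul, add_zero]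

theorem const_one_add_mul_idS (Φ : MLS B) : (one.add (Φ.mul idS)).const = 1 := by
  rw [const_add, const_mul, const_one, const_idS, mul_zero, add_zero]

theorem eq_mul_one_add_idS_mul_iff (Φ D : MLS B) :
    Φ = D.mul (one.add (idS.mul Φ)) ↔ Φ = (one.add (Φ.mul idS)).mul D := by
  have hU : IsRegular (one.add (idS.mul Φ)).const := by
    rw [const_one_add_idS_mul]; exact isRegular_one
  have hV : IsRegular (one.add (Φ.mul idS)).const := by
    rw [const_one_add_mul_idS]; exact isRegular_one
  constructor
  · intro h
    refine (mul_right_cancel hU.right ?_).symm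
    rw [mul_assoc, ← h, one_add_mul_idS_mul]
  · intro h
    refine mul_left_cancel hV.left ?_
    rw [one_add_mul_idS_mul, ← mul_assoc, ← h]

end MLS

theorem ovps_moment_cumulant_relations_equiv_general {R A B : Type*} [CommRing R] [Ring A]
    [Algebra R A] [Ring B] [Algebra R B] (P : OVPS R A B) (x : A) (C : MLS B) :
    (P.momentSeries x =
        (C.comp (MLS.idS.add ((MLS.idS.mul (P.momentSeries x)).mul MLS.idS))).mul
          (MLS.one.add (MLS.idS.mul (P.momentSeries x)))) ↔
      (P.momentSeries x =
        (MLS.one.add ((P.momentSeries x).mul MLS.idS)).mul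
          (C.comp (MLS.idS.add ((MLS.idS.mul (P.momentSeries x)).mul MLS.idS)))) :=
  MLS.eq_mul_one_add_idS_mul_iff _ _

/-- for the moment series `Φ` of a random variable `x`, the two
moment-cumulant relations `Φ = C∘(I + I·Φ·I)·(1 + I·Φ)` and
`Φ = (1 + Φ·I)·C∘(I + I·Φ·I)` are equivalent (they determine the same cumulant
series `C`). -/
theorem ovps_moment_cumulant_relations_equiv {R A B : Type*} [CommRing R] [Ring A]
    [Algebra R A] [Ring B] [Algebra R B] (P : OVPS R A B) (x : A) (C : MLS B)
    (hC : MLS.IsMultilinear R C) :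
    (P.momentSeries x =
        (C.comp (MLS.idS.add ((MLS.idS.mul (P.momentSeries x)).mul MLS.idS))).mul
          (MLS.one.add (MLS.idS.mul (P.momentSeries x)))) ↔
      (P.momentSeries x =
        (MLS.one.add ((P.momentSeries x).mul MLS.idS)).mul
          (C.comp (MLS.idS.add ((MLS.idS.mul (P.momentSeries x)).mul MLS.idS)))) :=
  ovps_moment_cumulant_relations_equiv_general P x C
end

section
/- For multilinear function series F, G over a unital algebra B with G_0 = 0, one has the 'sandwiching' identity (I·F)∘(G) = G·(F∘G) when G = H·I for some series H, i.e., (I·F)∘(H·I) = H·I·(F∘(H·I)) — more precisely, for any series F and H, (I·F)∘(H·I) = H·I·F∘(H·I). -/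
open scoped BigOperators

section Aux

variable {B : Type*} [Ring B]

private lemma MLSAux.apply_congr (Φ : MLS B) {k k' : ℕ} (h : k = k') {f : Fin k → B}
    {f' : Fin k' → B} (hf : ∀ i : Fin k, f i = f' (Fin.cast h i)) : Φ k f = Φ k' f' := by
  subst h
  congr 1
  funext i
  simpa using hf i

private lemma MLSAux.mul_idS_zero (H : MLS B) (f : Fin 0 → B) : (H.mul MLS.idS) 0 f = 0 := by
  simp [MLS.mul, MLS.idS]

private lemma MLSAux.mul_idS_F (F : MLS B) {k : ℕ} (hk : 0 < k) (a : Fin k → B) :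
    (MLS.idS.mul F) k a
      = a ⟨0, hk⟩ * F (k - 1) (fun i => a ⟨i.val + 1, by have := i.isLt; omega⟩) := by
  simp only [MLS.mul]
  rw [Fintype.sum_eq_single (⟨1, by omega⟩ : Fin (k + 1))]
  · simp only [MLS.idS]
    rw [dif_pos trivial]
    refine congrArg₂ (· * ·) (congrArg a (Fin.ext rfl)) ?_
    congr 1
    funext i
    exact congrArg a (Fin.ext (Nat.add_comm 1 i))
  · intro j hj
    have hj1 : (j : ℕ) ≠ 1 := fun h => hj (Fin.ext h)
    simp [MLS.idS, hj1]

/-- Prepending a block to a composition. -/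
private def MLSAux.consComp {m n : ℕ} (a : ℕ) (ha : 0 < a) (d : Composition m)
    (h : a + m = n) : Composition n :=
  ⟨a :: d.blocks,
    fun hi => by
      rcases List.mem_cons.mp hi with rfl | hi
      · exact ha
      · exact d.blocks_pos hi,
    by simp [d.blocks_sum, h]⟩

private lemma MLSAux.consComp_blocks {m n : ℕ} (a : ℕ) (ha : 0 < a) (d : Composition m)
    (h : a + m = n) : (MLSAux.consComp a ha d h).blocks = a :: d.blocks := rfl

private lemma MLSAux.consComp_sizeUpTo_succ {m n : ℕ} (a : ℕ) (ha : 0 < a) (d : Composition m)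
    (h : a + m = n) (i : ℕ) :
    (MLSAux.consComp a ha d h).sizeUpTo (i + 1) = a + d.sizeUpTo i := by
  simp [Composition.sizeUpTo, MLSAux.consComp]

private lemma MLSAux.blocks_ne_nil {N : ℕ} (hN : 0 < N) (c : Composition N) :
    c.blocks ≠ [] := by
  intro h
  have hs := c.blocks_sum
  rw [h] at hs
  simp at hs
  omega

private lemma MLSAux.headI_facts {N : ℕ} (hN : 0 < N) (c : Composition N) :
    0 < c.blocks.headI ∧ c.blocks.headI ≤ N ∧ c.blocks.headI + c.blocks.tail.sum = N := by
  have hne := MLSAux.blocks_ne_nil hN c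
  rcases hb : c.blocks with _ | ⟨a, l⟩
  · exact absurd hb hne
  · have hsum := c.blocks_sum
    rw [hb] at hsum
    simp only [List.sum_cons] at hsum
    have ha : 0 < a := c.blocks_pos (by rw [hb]; exact List.mem_cons_self)
    refine ⟨by simpa using ha, by simp; omega, by simp; omega⟩

/-- Splitting off the first block of a composition of a positive number. -/
private def MLSAux.splitComp {N : ℕ} (hN : 0 < N) (c : Composition N) :
    Σ q : Fin N, Composition (N - (q.val + 1)) :=
  ⟨⟨c.blocks.headI - 1, by have h := MLSAux.headI_facts hN c; omega⟩,
   ⟨c.blocks.tail, fun hi => c.blocks_pos (List.mem_of_mem_tail hi),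
    by
      show c.blocks.tail.sum = N - (c.blocks.headI - 1 + 1)
      have h := MLSAux.headI_facts hN c
      omega⟩⟩

private lemma MLSAux.sigma_ext {N : ℕ} (x y : Σ q : Fin N, Composition (N - (q.val + 1)))
    (h1 : x.1 = y.1) (h2 : x.2.blocks = y.2.blocks) : x = y := by
  obtain ⟨a, b⟩ := x
  obtain ⟨c, d⟩ := y
  cases h1
  exact congrArg (Sigma.mk a) (Composition.ext h2)

private lemma MLSAux.split_cons {N : ℕ} (hN : 0 < N) (q : Fin N)
    (d : Composition (N - (q.val + 1))) (h : (q.val + 1) + (N - (q.val + 1)) = N) :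
    MLSAux.splitComp hN (MLSAux.consComp (q.val + 1) (Nat.succ_pos _) d h) = ⟨q, d⟩ := by
  apply MLSAux.sigma_ext
  · apply Fin.ext
    simp [MLSAux.splitComp, MLSAux.consComp]
  · simp [MLSAux.splitComp, MLSAux.consComp]

private lemma MLSAux.cons_split {N : ℕ} (hN : 0 < N) (c : Composition N)
    (h : ((MLSAux.splitComp hN c).1.val + 1) + (N - ((MLSAux.splitComp hN c).1.val + 1)) = N) :
    MLSAux.consComp ((MLSAux.splitComp hN c).1.val + 1) (Nat.succ_pos _)
      (MLSAux.splitComp hN c).2 h = c := by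
  apply Composition.ext
  have hf := MLSAux.headI_facts hN c
  rw [MLSAux.consComp_blocks]
  show ((c.blocks.headI - 1) + 1) :: c.blocks.tail = c.blocks
  rw [Nat.sub_add_cancel hf.1]
  rcases hb : c.blocks with _ | ⟨a, l⟩
  · exact absurd hb (MLSAux.blocks_ne_nil hN c)
  · simp

end Aux

/-- the sandwiching identity `(I·F)∘(H·I) = H·I·(F∘(H·I))`
for any multilinear function series `F` and `H`. -/
theorem mls_sandwich_left {R B : Type*} [CommRing R] [Ring B] [Algebra R B]
    (F H : MLS B) (hF : MLS.IsMultilinear R F) (hH : MLS.IsMultilinear R H) :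
    (MLS.idS.mul F).comp (H.mul MLS.idS)
      = (H.mul MLS.idS).mul (F.comp (H.mul MLS.idS)) := by
  classical
  set G := H.mul MLS.idS with hG
  have G0 : ∀ f : Fin 0 → B, G 0 f = 0 := fun f => by
    rw [hG]; exact MLSAux.mul_idS_zero H f
  funext n b
  cases n with
  | zero =>
      have hL : (MLS.idS.mul F).comp G 0 b = 0 := by
        simp only [MLS.comp]
        refine Finset.sum_eq_zero fun c _ => ?_
        have hlen : c.length = 0 := by
          have hs := c.blocks_sum
          rcases hb : c.blocks with _ | ⟨a, l⟩
          · simp [Composition.length, hb]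
          · have ha : 0 < a := c.blocks_pos (by rw [hb]; exact List.mem_cons_self)
            rw [hb] at hs
            simp only [List.sum_cons] at hs
            omega
        rw [MLSAux.apply_congr (MLS.idS.mul F) hlen
          (f' := fun i : Fin 0 => i.elim0) (fun i => absurd i.isLt (by omega))]
        simp [MLS.mul, MLS.idS]
      have hR : (G.mul (F.comp G)) 0 b = 0 := by
        simp only [MLS.mul, Fin.sum_univ_succ, Fin.sum_univ_zero]
        rw [add_zero]
        exact mul_eq_zero_of_left (G0 _) _
      exact hL.trans hR.symm
  | succ n =>
      have hN : 0 < n + 1 := Nat.succ_pos n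
      have hlen : ∀ c : Composition (n + 1), 0 < c.length := fun c =>
        c.length_pos_of_pos hN
      have hfirst : ∀ (f : Fin ((0 : Fin (n + 1 + 1)) : ℕ) → B) (X : B),
          G ((0 : Fin (n + 1 + 1)) : ℕ) f * X = 0 := fun f X => by
        rw [show G ((0 : Fin (n + 1 + 1)) : ℕ) f = 0 from G0 f, zero_mul]
      have hbij : Function.Bijective
          (fun x : Σ q : Fin (n + 1), Composition (n + 1 - (q.val + 1)) =>
            (MLSAux.consComp (x.1.val + 1) (Nat.succ_pos _) x.2
              (by have := x.1.isLt; omega) : Composition (n + 1))) := by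
        refine Function.bijective_iff_has_inverse.mpr
          ⟨MLSAux.splitComp hN, fun x => ?_, fun c => ?_⟩
        · obtain ⟨q, d⟩ := x
          exact MLSAux.split_cons hN q d _
        · exact MLSAux.cons_split hN c _
      show (MLS.idS.mul F).comp G (n + 1) b = (G.mul (F.comp G)) (n + 1) b
      conv_lhs => simp only [MLS.comp]
      conv_rhs => simp only [MLS.mul, MLS.comp]
      rw [Fin.sum_univ_succ]
      simp only [hfirst, zero_add, Finset.mul_sum]
      rw [Finset.sum_sigma', Finset.univ_sigma_univ]
      refine Eq.trans (Finset.sum_congr rfl fun c _ => MLSAux.mul_idS_F F (hlen c) _) ?_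
      refine (Fintype.sum_bijective (M := B) _ hbij _ _ fun x => ?_).symm
      obtain ⟨q, d⟩ := x
      refine congrArg₂ (· * ·) ?_ ?_
      · refine MLSAux.apply_congr G rfl fun j => ?_
        refine congrArg b (Fin.ext ?_)
        erw [Composition.coe_embedding]
        simp
      · refine MLSAux.apply_congr F rfl fun i => ?_
        refine MLSAux.apply_congr G rfl fun j => ?_
        refine congrArg b (Fin.ext ?_)
        simp only [Composition.coe_embedding, Fin.coe_cast, Fin.val_succ,
          MLSAux.consComp_sizeUpTo_succ]
        erw [Composition.coe_embedding]
        simp only [Fin.coe_cast, MLSAux.consComp_sizeUpTo_succ]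
        omega
end

section
/- For multilinear function series F and H over a unital algebra B (H arbitrary), one has (F·I)∘(I·H) = F∘(I·H)·I·H, where I is the identity series. -/
open scoped BigOperators

namespace MLSAux
open MLS
set_option linter.unusedSectionVars false
variable {B : Type*} [Ring B]

lemma mls_congr (G : MLS B) {p q : ℕ} (h : p = q) {f : Fin p → B} {g : Fin q → B}
    (hfg : ∀ i : Fin p, f i = g ⟨i.val, h ▸ i.isLt⟩) : G p f = G q g := by
  subst h
  exact congrArg _ (funext fun i => (hfg i).trans (congrArg g (Fin.ext rfl)))

lemma mulI_pos (F : MLS B) {m : ℕ} (hm : m ≠ 0) (a : Fin m → B) :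
    (F.mul MLS.idS) m a
      = F (m-1) (fun i : Fin (m-1) => a ⟨i, by omega⟩) * a ⟨m-1, by omega⟩ := by
  unfold MLS.mul
  rw [Fintype.sum_eq_single (⟨m-1, by omega⟩ : Fin (m+1))]
  · have h1 : m - (m - 1) = 1 := by omega
    simp only [MLS.idS, h1, dif_pos]
    show F _ _ * a ⟨(m-1)+(0:ℕ), by omega⟩ = _
    congr 1
  · intro j hj
    have : m - j.val ≠ 1 := by
      intro hc
      have := j.isLt
      exact hj (Fin.ext (show j.val = m - 1 by omega))
    rw [MLS.idS, dif_neg this, mul_zero]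

lemma Imul_pos (H : MLS B) {p : ℕ} (hp : p ≠ 0) (a : Fin p → B) :
    (MLS.idS.mul H) p a
      = a ⟨0, by omega⟩ * H (p-1) (fun i : Fin (p-1) => a ⟨1 + i, by omega⟩) := by
  unfold MLS.mul
  rw [Fintype.sum_eq_single (⟨1, by omega⟩ : Fin (p+1))]
  · simp only [MLS.idS]
    rw [dif_pos trivial]
    rfl
  · intro j hj
    have : j.val ≠ 1 := fun hc => hj (Fin.ext hc)
    rw [MLS.idS, dif_neg this, zero_mul]

lemma mulI_zero (F : MLS B) (a : Fin 0 → B) : (F.mul MLS.idS) 0 a = 0 := by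
  simp [MLS.mul, MLS.idS]

lemma Imul_zero (H : MLS B) (a : Fin 0 → B) : (MLS.idS.mul H) 0 a = 0 := by
  simp [MLS.mul, MLS.idS]



lemma mul_apply (P Q : MLS B) (m : ℕ) (a : Fin m → B) :
    (P.mul Q) m a = ∑ k : Fin (m + 1),
      P k.val (fun i : Fin k.val => a (Fin.castLE (Nat.lt_succ_iff.mp k.isLt) i)) *
        Q (m - k.val) (fun i : Fin (m - k.val) =>
          a ⟨k.val + i.val, by have h1 := i.isLt; have h2 := k.isLt; omega⟩) := rfl

lemma comp_apply (P Q : MLS B) (m : ℕ) (a : Fin m → B) :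
    (P.comp Q) m a = ∑ c : Composition m,
      P c.length (fun i : Fin c.length =>
        Q (c.blocksFun i) (fun j : Fin (c.blocksFun i) => a (c.embedding i j))) := rfl

lemma mulI_eq_zero (F : MLS B) {m : ℕ} (hm : m = 0) (a : Fin m → B) :
    (F.mul MLS.idS) m a = 0 := by subst hm; exact mulI_zero F a

lemma comp_length_zero {c : Composition 0} : c.length = 0 := by
  have h1 := c.blocks_sum
  rcases hb : c.blocks with _ | ⟨x, l⟩
  · simp [Composition.length, hb]
  · exfalso
    have hx : 0 < x := c.blocks_pos (by rw [hb]; exact List.mem_cons_self)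
    rw [hb] at h1
    simp at h1
    omega

lemma sizeUpTo_pred_of_blocks {n : ℕ} (d : Composition n) {bs : List ℕ} {y : ℕ}
    (h : d.blocks = bs ++ [y]) : d.sizeUpTo (d.length - 1) = bs.sum := by
  have hlen : d.length = bs.length + 1 := by rw [Composition.length, h]; simp
  rw [Composition.sizeUpTo, h, hlen, Nat.add_sub_cancel, List.take_left]

lemma sizeUpTo_mk_dropLast {n k : ℕ} (c : Composition n) (c' : Composition k)
    (h : c'.blocks = c.blocks.dropLast) (i : ℕ) (hi : i ≤ c.blocks.length - 1) :
    c'.sizeUpTo i = c.sizeUpTo i := by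
  rw [Composition.sizeUpTo, Composition.sizeUpTo, h, List.dropLast_eq_take, List.take_take,
    min_eq_left hi]

lemma sigma_ext_s16 {n : ℕ} (x y : Σ k : Fin n, Composition k.val)
    (h1 : x.1.val = y.1.val) (h2 : x.2.blocks = y.2.blocks) : x = y := by
  obtain ⟨⟨k, hk⟩, c⟩ := x
  obtain ⟨⟨k', hk'⟩, c'⟩ := y
  dsimp at h1 h2
  subst h1
  exact Sigma.ext rfl (heq_of_eq (Composition.ext h2))

end MLSAux

/-- the sandwiching identity `(F·I)∘(I·H) = F∘(I·H)·I·H`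
for any multilinear function series `F` and `H`. -/
theorem mls_sandwich_right {R B : Type*} [CommRing R] [Ring B] [Algebra R B]
    (F H : MLS B) (hF : MLS.IsMultilinear R F) (hH : MLS.IsMultilinear R H) :
    (F.mul MLS.idS).comp (MLS.idS.mul H)
      = ((F.comp (MLS.idS.mul H)).mul MLS.idS).mul H := by
  classical
  funext n b
  rcases Nat.eq_zero_or_pos n with hn | hn
  · subst hn
    rw [MLSAux.comp_apply, MLSAux.mul_apply]
    rw [Finset.sum_eq_zero, Finset.sum_eq_zero]
    · intro k _
      rw [MLSAux.mulI_eq_zero _ (by omega), zero_mul]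
    · intro c _
      exact MLSAux.mulI_eq_zero _ MLSAux.comp_length_zero _
  · -- positive case
    have hRHS : (((F.comp (MLS.idS.mul H)).mul MLS.idS).mul H) n b
        = ∑ k : Fin n, ∑ c' : Composition k.val,
            F c'.length
              (fun i : Fin c'.length => (MLS.idS.mul H) (c'.blocksFun i)
                (fun j : Fin (c'.blocksFun i) => b ⟨c'.sizeUpTo i.val + j.val, by
                    have h2 := (c'.embedding i j).isLt
                    rw [Composition.coe_embedding] at h2
                    have h3 := k.isLt; omega⟩))
            * b ⟨k.val, k.isLt⟩
            * H (n - (k.val + 1)) (fun i : Fin (n - (k.val + 1)) =>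
                b ⟨k.val + 1 + i.val, by have := i.isLt; omega⟩) := by
      rw [MLSAux.mul_apply, Fin.sum_univ_succ]
      have h0 : ∀ x, ((F.comp (MLS.idS.mul H)).mul MLS.idS) 0 x = 0 := MLSAux.mulI_zero _
      simp only [Fin.val_zero, Fin.val_succ]
      rw [h0, zero_mul, zero_add]
      apply Finset.sum_congr rfl
      intro k _
      rw [MLSAux.mulI_pos _ (Nat.succ_ne_zero _), MLSAux.comp_apply]
      rw [Finset.sum_mul, Finset.sum_mul]
      apply Finset.sum_congr rfl
      intro c' _
      refine congrArg₂ (· * ·) (congrArg₂ (· * ·) ?_ rfl) rfl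
      exact MLSAux.mls_congr F rfl fun i =>
        MLSAux.mls_congr (MLS.idS.mul H) rfl fun j =>
          congrArg b (Fin.ext (by simp [Composition.coe_embedding]))
    have hLHS : ((F.mul MLS.idS).comp (MLS.idS.mul H)) n b
        = ∑ c : Composition n,
            F (c.length - 1) (fun i : Fin (c.length - 1) =>
                (MLS.idS.mul H) (c.blocksFun ⟨i.val, by omega⟩)
                  (fun j => b (c.embedding ⟨i.val, by omega⟩ j)))
              * (b (c.embedding ⟨c.length - 1, by
                      have := c.length_pos_of_pos hn; omega⟩
                    ⟨0, c.one_le_blocksFun _⟩)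
                 * H (c.blocksFun ⟨c.length - 1, by
                      have := c.length_pos_of_pos hn; omega⟩ - 1)
                   (fun i => b (c.embedding ⟨c.length - 1, by
                      have := c.length_pos_of_pos hn; omega⟩
                      ⟨1 + i.val, by have := i.isLt; omega⟩))) := by
      rw [MLSAux.comp_apply]
      apply Finset.sum_congr rfl
      intro c _
      have hlen : c.length ≠ 0 := (c.length_pos_of_pos hn).ne'
      rw [MLSAux.mulI_pos _ hlen]
      congr 1
      rw [MLSAux.Imul_pos _ (Nat.one_le_iff_ne_zero.mp (c.one_le_blocksFun _))]
    rw [hLHS, hRHS]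
    rw [Finset.sum_sigma']
    apply Finset.sum_bij'
      (i := fun (c : Composition n) (_ : c ∈ Finset.univ) =>
        (⟨⟨c.sizeUpTo (c.length - 1), by
            have hlp : 0 < c.length := c.length_pos_of_pos hn
            have h := c.sizeUpTo_strict_mono (i := c.length - 1) (by omega)
            rw [show c.length - 1 + 1 = c.length by omega, c.sizeUpTo_length] at h
            exact h⟩,
          ⟨c.blocks.dropLast,
            fun hi => c.blocks_pos (List.dropLast_subset _ hi),
            by simp [Composition.sizeUpTo, List.dropLast_eq_take, Composition.length]⟩⟩ :
          Σ k : Fin n, Composition k.val))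
      (j := fun x (_ : x ∈ _) =>
        (⟨x.2.blocks ++ [n - x.1.val], by
            intro i hi
            rcases List.mem_append.mp hi with h | h
            · exact x.2.blocks_pos h
            · have := x.1.isLt
              simp at h
              omega,
          by
            rw [List.sum_append, x.2.blocks_sum]
            have := x.1.isLt
            simp only [List.sum_cons, List.sum_nil, add_zero]
            omega⟩ : Composition n))
      (hi := fun c _ => Finset.mem_sigma.mpr ⟨Finset.mem_univ _, Finset.mem_univ _⟩)
      (hj := fun x _ => Finset.mem_univ _)
    · -- left inverse
      intro c _
      apply Composition.ext
      dsimp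
      have hb : c.blocks ≠ [] := by
        have := c.length_pos_of_pos hn
        exact List.ne_nil_of_length_pos this
      have hsum : c.blocks.dropLast.sum + c.blocks.getLast hb = n := by
        have h := congrArg List.sum (List.dropLast_append_getLast hb)
        simp only [List.sum_append, List.sum_cons, List.sum_nil, add_zero] at h
        rw [h]; exact c.blocks_sum
      have hsu : c.sizeUpTo (c.length - 1) = c.blocks.dropLast.sum :=
        MLSAux.sizeUpTo_pred_of_blocks c (List.dropLast_append_getLast hb).symm
      conv_rhs => rw [← List.dropLast_append_getLast hb]
      congr 1
      rw [hsu]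
      congr 1
      omega
    · -- right inverse
      intro x _
      apply MLSAux.sigma_ext_s16
      · dsimp
        rw [MLSAux.sizeUpTo_pred_of_blocks _ rfl, x.2.blocks_sum]
      · dsimp
        exact List.dropLast_concat
    · -- values
      intro c _
      dsimp
      rw [← mul_assoc]
      have hlp : 0 < c.length := c.length_pos_of_pos hn
      refine congrArg₂ (· * ·) (congrArg₂ (· * ·) ?_ ?_) ?_
      · apply MLSAux.mls_congr F (by simp [Composition.length])
        intro i
        apply MLSAux.mls_congr _ (by simp [Composition.blocksFun])
        intro j
        apply congrArg b
        apply Fin.ext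
        simp only [Composition.coe_embedding]
        congr 1
        exact (MLSAux.sizeUpTo_mk_dropLast c _ rfl i.val
          (show i.val ≤ c.length - 1 by have := i.isLt; omega)).symm
      · apply congrArg b
        apply Fin.ext
        simp [Composition.coe_embedding]
      · have hp : c.length - 1 < c.length := by omega
        have h1 : c.sizeUpTo (c.length - 1) + c.blocksFun ⟨c.length - 1, hp⟩ = n :=
          (c.sizeUpTo_succ' ⟨c.length - 1, hp⟩).symm.trans
            (by rw [show (c.length - 1) + 1 = c.length from by omega, c.sizeUpTo_length])
        have h2 : 1 ≤ c.blocksFun ⟨c.length - 1, hp⟩ := c.one_le_blocksFun _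
        apply MLSAux.mls_congr H
          (show c.blocksFun ⟨c.length - 1, hp⟩ - 1
              = n - (c.sizeUpTo (c.length - 1) + 1) by omega)
        intro i
        apply congrArg b
        apply Fin.ext
        simp only [Composition.coe_embedding]
        omega
end
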